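/- Let ∅ ≠ A ⊆ R̃^d be internal and sharply bounded, and let (A_ε)_ε be any sharply bounded representative of A. Then the following three sets coincide: (i) N(A); (ii) the set of nets (u_ε)_ε of smooth functions ℝ^d → ℂ such that for every multi-index α and every m ∈ ℕ there exists N ∈ ℕ with sup_{x ∈ A_ε + ε^N} |∂^α u_ε(x)| ≤ ε^m for all sufficiently small ε; (iii) the set of nets (u_ε)_ε ∈ E_M(A) such that for every multi-index α the net (sup_{x ∈ A_ε} |∂^α u_ε(x)|)_ε is negligible. -/

import Mathlib

open Real Set Metric MeasureTheory Filter

noncomputable section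

/-- `P ε` holds for all sufficiently small `ε ∈ (0,1)`. -/
def EvSmall (P : ℝ → Prop) : Prop :=
  ∃ ε₀ : ℝ, 0 < ε₀ ∧ ε₀ < 1 ∧ ∀ ε : ℝ, 0 < ε → ε ≤ ε₀ → P ε

/-- A net `(u_ε)` with values in a seminormed group is moderate. -/
def Moderate {E : Type*} [SeminormedAddGroup E] (u : ℝ → E) : Prop :=
  ∃ N : ℕ, EvSmall fun ε => ‖u ε‖ ≤ ε ^ (-(N : ℝ))

/-- A net `(u_ε)` is negligible. -/
def Negligible {E : Type*} [SeminormedAddGroup E] (u : ℝ → E) : Prop :=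
  ∀ m : ℕ, EvSmall fun ε => ‖u ε‖ ≤ ε ^ (m : ℝ)

/-- Two nets represent the same generalized point. -/
def EqvNet {E : Type*} [SeminormedAddGroup E] (x y : ℝ → E) : Prop :=
  Negligible fun ε => x ε - y ε

/-- The set of generalized points of `Ẽ` (modelled as the moderate nets). -/
def GenPt (E : Type*) [SeminormedAddGroup E] : Set (ℝ → E) := {x | Moderate x}

/-- `x` is a representative of some generalized point belonging to `A`. -/
def IsReprOfPointOf {E : Type*} [SeminormedAddGroup E] (A : Set (ℝ → E)) (x : ℝ → E) : Prop :=
  Moderate x ∧ ∃ a ∈ A, EqvNet x a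

/-- The sharp norm `e^{-v(x)}` of a (moderate) net. -/
noncomputable def sharpNorm {E : Type*} [SeminormedAddGroup E] (x : ℝ → E) : ℝ :=
  sInf {r : ℝ | ∃ b : ℝ, r = Real.exp (-b) ∧ EvSmall fun ε => ‖x ε‖ ≤ ε ^ b}

/-- `A` is open for the sharp topology (as a set of generalized points). -/
def SharpOpen {E : Type*} [SeminormedAddGroup E] (A : Set (ℝ → E)) : Prop :=
  (∀ x ∈ A, Moderate x) ∧
  ∀ x ∈ A, ∃ r > 0, ∀ y : ℝ → E, Moderate y →
    sharpNorm (fun ε => y ε - x ε) < r → y ∈ A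

/-- `B` is a sharp neighbourhood of `A`. -/
def IsSharpNbhdOf {E : Type*} [SeminormedAddGroup E] (B A : Set (ℝ → E)) : Prop :=
  A ⊆ B ∧ ∀ x ∈ A, ∃ r > 0, ∀ y : ℝ → E, Moderate y →
    sharpNorm (fun ε => y ε - x ε) < r → y ∈ B

/-- The internal set with representative `(Aε)`. -/
def InternalSet {E : Type*} [SeminormedAddGroup E] (Aε : ℝ → Set E) : Set (ℝ → E) :=
  {x | Moderate x ∧ ∃ y : ℝ → E, EqvNet x y ∧ EvSmall fun ε => y ε ∈ Aε ε}

/-- `(Aε)` is a sharply bounded representative. -/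
def SharplyBddRep {E : Type*} [SeminormedAddGroup E] (Aε : ℝ → Set E) : Prop :=
  ∃ M : ℕ, EvSmall fun ε => ∀ x ∈ Aε ε, ‖x‖ ≤ ε ^ (-(M : ℝ))

/-- A set of generalized points is sharply bounded. -/
def SharplyBddSet {E : Type*} [SeminormedAddGroup E] (A : Set (ℝ → E)) : Prop :=
  ∃ C : ℝ, ∀ x ∈ A, sharpNorm x ≤ C

/-- The interleaved closure of a set of generalized points. -/
def interleaved {E : Type*} [SeminormedAddGroup E] (A : Set (ℝ → E)) : Set (ℝ → E) :=
  {x | ∃ (m : ℕ) (S : Fin m → Set ℝ) (y : Fin m → ℝ → E),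
    (∀ ε ∈ Set.Ioo (0:ℝ) 1, ∃! j, ε ∈ S j) ∧ (∀ j, y j ∈ A) ∧
    ∀ ε ∈ Set.Ioo (0:ℝ) 1, ∀ j, ε ∈ S j → x ε = y j ε}

/-- A net of smooth functions (smooth for each ε ∈ (0,1)). -/
def SmoothNet {V : Type*} [NormedAddCommGroup V] [NormedSpace ℝ V] (u : ℝ → V → ℂ) : Prop :=
  ∀ ε : ℝ, 0 < ε → ε < 1 → ContDiff ℝ (⊤ : ℕ∞) (u ε)

/-- The nets belonging to `E_M(A)` : all derivatives are moderate along the points of `A`. -/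
def EMod {V : Type*} [NormedAddCommGroup V] [NormedSpace ℝ V]
    (A : Set (ℝ → V)) (u : ℝ → V → ℂ) : Prop :=
  SmoothNet u ∧ ∀ (n : ℕ) (x : ℝ → V), IsReprOfPointOf A x →
    Moderate fun ε => iteratedFDeriv ℝ n (u ε) (x ε)

/-- The nets belonging to `N(A)` : all derivatives are negligible along the points of `A`. -/
def NNeg {V : Type*} [NormedAddCommGroup V] [NormedSpace ℝ V]
    (A : Set (ℝ → V)) (u : ℝ → V → ℂ) : Prop :=
  SmoothNet u ∧ ∀ (n : ℕ) (x : ℝ → V), IsReprOfPointOf A x →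
    Negligible fun ε => iteratedFDeriv ℝ n (u ε) (x ε)

/-- `u` and `v` define the same element of `G̃(A)`. -/
def GEq {V : Type*} [NormedAddCommGroup V] [NormedSpace ℝ V]
    (A : Set (ℝ → V)) (u v : ℝ → V → ℂ) : Prop :=
  NNeg A fun ε z => u ε z - v ε z

/-- `x̃ ≤ ỹ` in `R̃` (for the given representatives). -/
def RleNet (x y : ℝ → ℝ) : Prop := ∀ m : ℕ, EvSmall fun ε => x ε ≤ y ε + ε ^ (m : ℝ)

/-- `x̃ ≫ 0` in `R̃`. -/
def StrPosNet (x : ℝ → ℝ) : Prop := ∃ m : ℕ, EvSmall fun ε => ε ^ (m : ℝ) ≤ x ε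

/-- `x̃ ≪ ỹ` in `R̃`. -/
def RltlNet (x y : ℝ → ℝ) : Prop := StrPosNet fun ε => y ε - x ε

/-- The operator `∂̄ = ½(∂ₓ + i ∂_y)` on smooth functions `ℂ → ℂ`. -/
def dbar (u : ℂ → ℂ) (z : ℂ) : ℂ :=
  (fderiv ℝ u z 1 + Complex.I * fderiv ℝ u z Complex.I) / 2

/-- The iterated derivative `D^k u = ∂ₓ^k u`. -/
def Dpow : ℕ → (ℂ → ℂ) → ℂ → ℂ
  | 0, u => u
  | (k+1), u => Dpow k fun z => fderiv ℝ u z 1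

/-- `u ∈ G̃_H(A)` : generalized holomorphic functions on `A ⊆ C̃`. -/
def GHol (A : Set (ℝ → ℂ)) (u : ℝ → ℂ → ℂ) : Prop :=
  EMod A u ∧ NNeg A fun ε => dbar (u ε)

/-- A continuous, piecewise `C¹` function on `[0,1]` (with its partition). -/
structure PwC1Path where
  toFun : ℝ → ℂ
  n : ℕ
  pt : Fin (n + 1) → ℝ
  mono : Monotone pt
  first : pt 0 = 0
  last : pt (Fin.last n) = 1
  cont : ContinuousOn toFun (Set.Icc 0 1)
  piece : ∀ i : Fin n, ContDiffOn ℝ 1 toFun (Set.Icc (pt i.castSucc) (pt i.succ))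

/-- A net of piecewise `C¹` paths which is moderate for the `C¹_pw` norm. -/
def PathModerate (γ : ℝ → PwC1Path) : Prop :=
  (∃ N : ℕ, EvSmall fun ε => ∀ t ∈ Set.Icc (0:ℝ) 1, ‖(γ ε).toFun t‖ ≤ ε ^ (-(N:ℝ))) ∧
  (∃ N : ℕ, EvSmall fun ε => ∀ᵐ t ∂(volume.restrict (Set.Icc (0:ℝ) 1)),
      ‖deriv (γ ε).toFun t‖ ≤ ε ^ (-(N:ℝ)))

/-- Two nets of paths represent the same generalized path
(their difference is negligible for the `C¹_pw` norm). -/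
def PathEqv (γ γ' : ℝ → PwC1Path) : Prop :=
  ∀ m : ℕ, EvSmall fun ε =>
    (∀ t ∈ Set.Icc (0:ℝ) 1, ‖(γ ε).toFun t - (γ' ε).toFun t‖ ≤ ε ^ (m:ℝ)) ∧
    (∀ᵐ t ∂(volume.restrict (Set.Icc (0:ℝ) 1)),
      ‖deriv (γ ε).toFun t - deriv (γ' ε).toFun t‖ ≤ ε ^ (m:ℝ))

/-- `γ` is a (generalized) path in `A ⊆ C̃`. -/
def PathIn (A : Set (ℝ → ℂ)) (γ : ℝ → PwC1Path) : Prop :=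
  PathModerate γ ∧ ∀ t : ℝ → ℝ, (∀ ε, t ε ∈ Set.Icc (0:ℝ) 1) →
    IsReprOfPointOf A fun ε => (γ ε).toFun (t ε)

/-- The complex path integral `∫_γ u(z) dz` along a piecewise `C¹` path. -/
noncomputable def pathIntegral (γ : PwC1Path) (u : ℂ → ℂ) : ℂ :=
  ∑ i : Fin γ.n, ∫ t in (γ.pt i.castSucc)..(γ.pt i.succ),
    u (γ.toFun t) * derivWithin γ.toFun (Set.Icc (γ.pt i.castSucc) (γ.pt i.succ)) t

/-- The path is closed: `γ(0) = γ(1)` as generalized points. -/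
def ClosedPath (γ : ℝ → PwC1Path) : Prop :=
  Negligible fun ε => (γ ε).toFun 1 - (γ ε).toFun 0

/-- A continuous, piecewise `C¹` function on `[0,1]²` (with its grid partition). -/
structure PwC1Homotopy where
  toFun : ℝ × ℝ → ℂ
  n : ℕ
  pt : Fin (n + 1) → ℝ
  mono : Monotone pt
  first : pt 0 = 0
  last : pt (Fin.last n) = 1
  cont : ContinuousOn toFun (Set.Icc 0 1 ×ˢ Set.Icc 0 1)
  piece : ∀ i j : Fin n, ContDiffOn ℝ 1 toFun
    (Set.Icc (pt i.castSucc) (pt i.succ) ×ˢ Set.Icc (pt j.castSucc) (pt j.succ))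

/-- A moderate net of piecewise `C¹` functions on the square. -/
def HomotopyModerate (H : ℝ → PwC1Homotopy) : Prop :=
  (∃ N : ℕ, EvSmall fun ε => ∀ p ∈ (Set.Icc (0:ℝ) 1 ×ˢ Set.Icc (0:ℝ) 1),
      ‖(H ε).toFun p‖ ≤ ε ^ (-(N:ℝ))) ∧
  (∃ N : ℕ, EvSmall fun ε =>
      ∀ᵐ p ∂(volume.restrict ((Set.Icc (0:ℝ) 1 ×ˢ Set.Icc (0:ℝ) 1) : Set (ℝ × ℝ))),
      ‖fderiv ℝ (H ε).toFun p‖ ≤ ε ^ (-(N:ℝ)))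

/-- `H` is a homotopy in `A` between the closed paths `γ` and `γ'`. -/
def IsHomotopyBetween (A : Set (ℝ → ℂ)) (γ γ' : ℝ → PwC1Path)
    (H : ℝ → PwC1Homotopy) : Prop :=
  HomotopyModerate H ∧
  (∀ t : ℝ → ℝ, (∀ ε, t ε ∈ Set.Icc (0:ℝ) 1) →
    (Negligible fun ε => (H ε).toFun (t ε, 0) - (γ ε).toFun (t ε)) ∧
    (Negligible fun ε => (H ε).toFun (t ε, 1) - (γ' ε).toFun (t ε))) ∧
  (∀ s : ℝ → ℝ, (∀ ε, s ε ∈ Set.Icc (0:ℝ) 1) →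
    Negligible fun ε => (H ε).toFun (0, s ε) - (H ε).toFun (1, s ε)) ∧
  (∀ t s : ℝ → ℝ, (∀ ε, t ε ∈ Set.Icc (0:ℝ) 1) → (∀ ε, s ε ∈ Set.Icc (0:ℝ) 1) →
    IsReprOfPointOf A fun ε => (H ε).toFun (t ε, s ε))

/-!
A point of the internal set `[(A_ε)]` lies within `ε^N` of `A_ε` for every `N`, which gives
(ii) ⇒ `N(A)` at once. Conversely, if (ii) fails for some derivative, there are `ε_k → 0` and
points `b_k` within `ε_k^k` of `A_{ε_k}` where that derivative exceeds `ε_k^m`; gluing the `b_k`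
into a net, completed by a fixed point of `A` off the sequence, yields a point of `A` (sharp
boundedness of `(A_ε)` makes it moderate) contradicting `N(A)`. For (iii) ⇒ `N(A)`, compare
`x_ε` with a negligibly close `y_ε ∈ A_ε` by the mean value inequality, evaluated at the point
`z_ε` of the segment where the next derivative is largest: `z` is again a point of `A`, so that
derivative is moderate along `z`, while `‖x_ε - y_ε‖` is negligible.
-/

open Asymptotics Topology

lemma exists_seq_tendsto_forall_of_frequently {α : Type*} {l : Filter α}
    [l.IsCountablyGenerated] {p : ℕ → α → Prop} (h : ∀ k, ∃ᶠ x in l, p k x) :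
    ∃ f : ℕ → α, Tendsto f atTop l ∧ ∀ k, p k (f k) := by
  obtain ⟨s, hs⟩ := l.exists_antitone_basis
  choose f hf using fun k => ((h k).and_eventually (hs.mem k)).exists
  exact ⟨f, hs.tendsto fun k => (hf k).2, fun k => (hf k).1⟩

lemma Function.exists_extend_eq_of_mem_range {α β γ : Type*} {f : α → β} (g : α → γ)
    (e : β → γ) {b : β} (hb : ∃ a, f a = b) : ∃ a, f a = b ∧ Function.extend f g e b = g a := by
  classical
  exact ⟨hb.choose, hb.choose_spec, by rw [Function.extend_def, dif_pos hb]⟩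

lemma exists_dist_lt_two_mul_of_mem_cthickening {α : Type*} [PseudoMetricSpace α] {δ : ℝ}
    (hδ : 0 < δ) {s : Set α} {x : α} (hx : x ∈ cthickening δ s) : ∃ y ∈ s, dist x y < 2 * δ :=
  mem_thickening_iff.1 (cthickening_subset_thickening' (by linarith) (by linarith) _ hx)

lemma isCompact_segment {V : Type*} [NormedAddCommGroup V] [NormedSpace ℝ V] (x y : V) :
    IsCompact (segment ℝ x y) := by
  rw [segment_eq_image_lineMap]
  exact isCompact_Icc.image AffineMap.lineMap_continuous

lemma exists_mem_segment_norm_sub_le {V F : Type*} [NormedAddCommGroup V] [NormedSpace ℝ V]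
    [NormedAddCommGroup F] [NormedSpace ℝ F] {g : V → F} (hg : ContDiff ℝ 1 g) (x y : V) :
    ∃ z ∈ segment ℝ x y, ‖g x - g y‖ ≤ ‖fderiv ℝ g z‖ * ‖x - y‖ := by
  obtain ⟨z, hz, hmax⟩ := (isCompact_segment x y).exists_isMaxOn
    ⟨x, left_mem_segment ℝ x y⟩ (hg.continuous_fderiv one_ne_zero).norm.continuousOn
  exact ⟨z, hz, (convex_segment x y).norm_image_sub_le_of_norm_fderiv_le
    (fun _ _ => (hg.differentiable one_ne_zero).differentiableAt) (fun _ hp => hmax hp)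
    (right_mem_segment ℝ x y) (left_mem_segment ℝ x y)⟩

lemma evSmall_iff_eventually {P : ℝ → Prop} : EvSmall P ↔ ∀ᶠ ε in 𝓝[>] (0 : ℝ), P ε := by
  rw [(nhdsGT_basis (0 : ℝ)).eventually_iff]
  constructor
  · rintro ⟨ε₀, hε₀, -, hP⟩
    exact ⟨ε₀, hε₀, fun ε hε => hP ε hε.1 hε.2.le⟩
  · rintro ⟨δ, hδ, hP⟩
    refine ⟨min (δ / 2) (1 / 2), by positivity, by linarith [min_le_right (δ / 2) (1 / 2)],
      fun ε hε hεδ => hP ⟨hε, ?_⟩⟩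
    linarith [min_le_left (δ / 2) (1 / 2)]

lemma eventually_lt_one_nhdsGT_zero : ∀ᶠ ε in 𝓝[>] (0 : ℝ), ε < 1 :=
  nhdsWithin_le_nhds (eventually_lt_nhds one_pos)

lemma isLittleO_rpow_nhdsGT_zero {a b : ℝ} (hab : b < a) :
    (fun ε : ℝ => ε ^ a) =o[𝓝[>] 0] fun ε => ε ^ b := by
  have hsmall : (fun ε : ℝ => ε ^ (a - b)) =o[𝓝[>] 0] fun _ => (1 : ℝ) := by
    rw [isLittleO_one_iff]
    have := (Real.continuousAt_rpow_const 0 (a - b) (Or.inr (sub_pos.2 hab).le)).tendsto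
    rw [Real.zero_rpow (sub_pos.2 hab).ne'] at this
    exact this.mono_left nhdsWithin_le_nhds
  refine ((isBigO_refl (fun ε : ℝ => ε ^ b) _).mul_isLittleO hsmall).congr' ?_ (by simp)
  filter_upwards [self_mem_nhdsWithin] with ε hε
  rw [← Real.rpow_add hε, add_sub_cancel]

lemma eventually_norm_le_rpow_of_isBigO {E : Type*} [SeminormedAddCommGroup E] {u : ℝ → E}
    {a b : ℝ} (hu : u =O[𝓝[>] 0] fun ε => ε ^ a) (hab : b < a) :
    ∀ᶠ ε in 𝓝[>] (0 : ℝ), ‖u ε‖ ≤ ε ^ b := by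
  filter_upwards [(hu.trans_isLittleO (isLittleO_rpow_nhdsGT_zero hab)).bound one_pos,
    self_mem_nhdsWithin] with ε hε hpos
  rwa [one_mul, Real.norm_of_nonneg (Real.rpow_nonneg (le_of_lt hpos) b)] at hε

section Nets

variable {E F : Type*} [SeminormedAddCommGroup E] [SeminormedAddCommGroup F]

lemma negligible_iff_isBigO {u : ℝ → E} :
    Negligible u ↔ ∀ m : ℕ, u =O[𝓝[>] 0] fun ε => ε ^ (m : ℝ) := by
  refine ⟨fun hu m => IsBigO.of_bound 1 ?_, fun hu m => ?_⟩
  · filter_upwards [evSmall_iff_eventually.1 (hu m), self_mem_nhdsWithin] with ε hε hpos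
    rwa [one_mul, Real.norm_of_nonneg (Real.rpow_nonneg (le_of_lt hpos) _)]
  · exact evSmall_iff_eventually.2
      (eventually_norm_le_rpow_of_isBigO (hu (m + 1)) (by push_cast; linarith))

lemma moderate_iff_isBigO {u : ℝ → E} :
    Moderate u ↔ ∃ N : ℕ, u =O[𝓝[>] 0] fun ε => ε ^ (-(N : ℝ)) := by
  refine ⟨fun ⟨N, hN⟩ => ⟨N, IsBigO.of_bound 1 ?_⟩, fun ⟨N, hN⟩ => ⟨N + 1, ?_⟩⟩
  · filter_upwards [evSmall_iff_eventually.1 hN, self_mem_nhdsWithin] with ε hε hpos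
    rwa [one_mul, Real.norm_of_nonneg (Real.rpow_nonneg (le_of_lt hpos) _)]
  · exact evSmall_iff_eventually.2
      (eventually_norm_le_rpow_of_isBigO hN (by push_cast; linarith))

lemma Negligible.of_isBigO {u : ℝ → E} {v : ℝ → F} (hv : Negligible v)
    (h : u =O[𝓝[>] 0] v) : Negligible u :=
  negligible_iff_isBigO.2 fun m => h.trans (negligible_iff_isBigO.1 hv m)

lemma Negligible.add {u v : ℝ → E}
    (hu : Negligible u) (hv : Negligible v) : Negligible (u + v) :=
  negligible_iff_isBigO.2 fun m =>
    (negligible_iff_isBigO.1 hu m).add (negligible_iff_isBigO.1 hv m)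

lemma Negligible.moderate {u : ℝ → E} (hu : Negligible u) : Moderate u :=
  ⟨0, by simpa using hu 0⟩

lemma Moderate.norm_mul_negligible {u : ℝ → E} {v : ℝ → F} (hu : Moderate u)
    (hv : Negligible v) : Negligible fun ε => ‖u ε‖ * ‖v ε‖ := by
  obtain ⟨N, hN⟩ := moderate_iff_isBigO.1 hu
  refine negligible_iff_isBigO.2 fun m => ?_
  refine (hN.norm_left.mul (negligible_iff_isBigO.1 hv (m + N)).norm_left).trans_eventuallyEq ?_
  filter_upwards [self_mem_nhdsWithin] with ε hε
  rw [← Real.rpow_add hε]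
  push_cast
  ring_nf

lemma EqvNet.refl (x : ℝ → E) : EqvNet x x :=
  negligible_iff_isBigO.2 fun _ => by simpa [sub_self] using isBigO_zero _ _

lemma EqvNet.symm {x y : ℝ → E} (h : EqvNet x y) : EqvNet y x :=
  Negligible.of_isBigO h (IsBigO.of_bound' (Eventually.of_forall fun _ => (norm_sub_rev _ _).le))

lemma EqvNet.trans {x y z : ℝ → E} (hxy : EqvNet x y) (hyz : EqvNet y z) : EqvNet x z := by
  simpa only [EqvNet, Pi.add_def, sub_add_sub_cancel] using hxy.add hyz

lemma Moderate.of_eqvNet {x y : ℝ → E} (hy : Moderate y) (hxy : EqvNet x y) : Moderate x := by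
  obtain ⟨N, hN⟩ := moderate_iff_isBigO.1 hy
  have hlt : -((N + 1 : ℕ) : ℝ) < -(N : ℝ) := by push_cast; linarith
  have hdiff := (negligible_iff_isBigO.1 hxy 0).trans_isLittleO
    (isLittleO_rpow_nhdsGT_zero (hlt.trans_le (by simp)))
  refine moderate_iff_isBigO.2 ⟨N + 1, ?_⟩
  simpa using hdiff.isBigO.add (hN.trans_isLittleO (isLittleO_rpow_nhdsGT_zero hlt)).isBigO

end Nets

section InternalSets
variable {E : Type*} [SeminormedAddCommGroup E] {Aε : ℝ → Set E}

lemma isReprOfPointOf_internalSet_iff {x : ℝ → E} :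
    IsReprOfPointOf (InternalSet Aε) x ↔ x ∈ InternalSet Aε := by
  constructor
  · rintro ⟨hx, a, ⟨-, y, hay, hy⟩, hxa⟩
    exact ⟨hx, y, hxa.trans hay, hy⟩
  · intro hx
    exact ⟨hx.1, x, hx, EqvNet.refl x⟩

lemma SharplyBddRep.moderate (hbd : SharplyBddRep Aε) {y : ℝ → E}
    (hy : EvSmall fun ε => y ε ∈ Aε ε) : Moderate y := by
  obtain ⟨M, hM⟩ := hbd
  refine ⟨M, evSmall_iff_eventually.2 ?_⟩
  filter_upwards [evSmall_iff_eventually.1 hM, evSmall_iff_eventually.1 hy] with ε hM hy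
  exact hM _ hy

lemma evSmall_mem_cthickening_of_mem_internalSet {x : ℝ → E} (hx : x ∈ InternalSet Aε)
    (N : ℕ) : EvSmall fun ε => x ε ∈ cthickening (ε ^ (N : ℝ)) (Aε ε) := by
  obtain ⟨-, y, hxy, hy⟩ := hx
  rw [evSmall_iff_eventually] at hy ⊢
  filter_upwards [evSmall_iff_eventually.1 (hxy N), hy] with ε hxy hy
  exact mem_cthickening_of_dist_le _ _ _ _ hy (by rwa [dist_eq_norm])

lemma exists_mem_internalSet_frequently (hbd : SharplyBddRep Aε)
    (hne : (InternalSet Aε).Nonempty) {Q : ℝ → E → Prop}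
    (hQ : ∀ N : ℕ, ∃ᶠ ε in 𝓝[>] 0, ∃ b ∈ cthickening (ε ^ (N : ℝ)) (Aε ε), Q ε b) :
    ∃ x ∈ InternalSet Aε, ∃ᶠ ε in 𝓝[>] 0, Q ε (x ε) := by
  obtain ⟨-, -, y, -, hy⟩ := hne
  have hnear : ∀ N : ℕ, ∃ᶠ ε in 𝓝[>] 0,
      0 < ε ∧ ∃ b, Q ε b ∧ ∃ w ∈ Aε ε, dist b w < 2 * ε ^ (N : ℝ) := by
    refine fun N => ((hQ N).and_eventually self_mem_nhdsWithin).mono ?_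
    rintro ε ⟨⟨b, hb, hbQ⟩, hε⟩
    exact ⟨hε, b, hbQ, exists_dist_lt_two_mul_of_mem_cthickening (Real.rpow_pos_of_pos hε _) hb⟩
  obtain ⟨f, hf, hfQ⟩ := exists_seq_tendsto_forall_of_frequently hnear
  choose hfpos b hbQ w hwA hbw using hfQ
  -- Gluing pairs keeps both components on the same index `k` even where `f` is not injective.
  set p := Function.extend f (fun k => (b k, w k)) (fun ε => (y ε, y ε))
  have hp : ∀ ε, (∃ k, f k = ε ∧ p ε = (b k, w k)) ∨ p ε = (y ε, y ε) := fun ε => by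
    by_cases h : ∃ k, f k = ε
    · exact Or.inl (Function.exists_extend_eq_of_mem_range _ _ h)
    · exact Or.inr (Function.extend_apply' _ _ _ h)
  have hpA : EvSmall fun ε => (p ε).2 ∈ Aε ε := by
    rw [evSmall_iff_eventually] at hy ⊢
    filter_upwards [hy] with ε hy
    rcases hp ε with ⟨k, rfl, hk⟩ | hk
    · simpa [hk] using hwA k
    · simpa [hk] using hy
  have hpeqv : EqvNet (fun ε => (p ε).1) (fun ε => (p ε).2) := by
    refine negligible_iff_isBigO.2 fun m => IsBigO.of_bound 2 ?_
    filter_upwards [(Set.finite_Iic m).eventually_all.2 fun j _ =>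
        nhdsWithin_le_nhds (eventually_lt_nhds (hfpos j)),
      self_mem_nhdsWithin, eventually_lt_one_nhdsGT_zero] with ε hfar hε hε1
    rcases hp ε with ⟨k, rfl, hk⟩ | hk
    · have hmk : m ≤ k := le_of_not_gt fun hkm => lt_irrefl _ (hfar k hkm.le)
      rw [hk, Real.norm_of_nonneg (Real.rpow_nonneg hε.le _), ← dist_eq_norm]
      refine (hbw k).le.trans (mul_le_mul_of_nonneg_left ?_ zero_le_two)
      exact Real.rpow_le_rpow_of_exponent_ge hε hε1.le (mod_cast hmk)
    · simp [hk]
  refine ⟨fun ε => (p ε).1, ⟨(hbd.moderate hpA).of_eqvNet hpeqv, _, hpeqv, hpA⟩, ?_⟩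
  refine hf.frequently (Frequently.of_forall fun k => ?_)
  obtain ⟨j, hj, hpj⟩ : ∃ j, f j = f k ∧ p (f k) = (b j, w j) :=
    Function.exists_extend_eq_of_mem_range _ _ ⟨k, rfl⟩
  show Q (f k) (p (f k)).1
  rw [hpj, ← hj]
  exact hbQ j

end InternalSets

section GeneralizedFunctions
variable {V : Type*} [NormedAddCommGroup V] [NormedSpace ℝ V] {Aε : ℝ → Set V}
  {u : ℝ → V → ℂ}

lemma NNeg.eMod {A : Set (ℝ → V)} (h : NNeg A u) : EMod A u :=
  ⟨h.1, fun n x hx => (h.2 n x hx).moderate⟩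

lemma NNeg.of_forall_cthickening (hsm : SmoothNet u)
    (h : ∀ n m : ℕ, ∃ N : ℕ, EvSmall fun ε => ∀ x ∈ cthickening (ε ^ (N : ℝ)) (Aε ε),
      ‖iteratedFDeriv ℝ n (u ε) x‖ ≤ ε ^ (m : ℝ)) :
    NNeg (InternalSet Aε) u := by
  refine ⟨hsm, fun n x hx m => ?_⟩
  obtain ⟨N, hN⟩ := h n m
  have hxN := evSmall_mem_cthickening_of_mem_internalSet
    (isReprOfPointOf_internalSet_iff.1 hx) N
  rw [evSmall_iff_eventually] at hN hxN ⊢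
  filter_upwards [hN, hxN] with ε hN hx
  exact hN _ hx

lemma NNeg.forall_cthickening (hbd : SharplyBddRep Aε) (hne : (InternalSet Aε).Nonempty)
    (h : NNeg (InternalSet Aε) u) (n m : ℕ) :
    ∃ N : ℕ, EvSmall fun ε => ∀ x ∈ cthickening (ε ^ (N : ℝ)) (Aε ε),
      ‖iteratedFDeriv ℝ n (u ε) x‖ ≤ ε ^ (m : ℝ) := by
  by_contra! hc
  simp only [evSmall_iff_eventually, not_eventually, not_forall, not_le, exists_prop] at hc
  obtain ⟨x, hx, hfreq⟩ := exists_mem_internalSet_frequently hbd hne hc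
  have hbound := evSmall_iff_eventually.1 (h.2 n x (isReprOfPointOf_internalSet_iff.2 hx) m)
  exact hfreq (hbound.mono fun _ hε => hε.not_gt)

lemma NNeg.forall_mem (hbd : SharplyBddRep Aε) (hne : (InternalSet Aε).Nonempty)
    (h : NNeg (InternalSet Aε) u) (n m : ℕ) :
    EvSmall fun ε => ∀ x ∈ Aε ε, ‖iteratedFDeriv ℝ n (u ε) x‖ ≤ ε ^ (m : ℝ) := by
  obtain ⟨N, hN⟩ := h.forall_cthickening hbd hne n m
  exact evSmall_iff_eventually.2 ((evSmall_iff_eventually.1 hN).mono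
    fun _ hε x hx => hε x (self_subset_cthickening _ hx))

lemma NNeg.of_eMod_of_forall_mem (hE : EMod (InternalSet Aε) u)
    (h : ∀ n m : ℕ, EvSmall fun ε => ∀ x ∈ Aε ε, ‖iteratedFDeriv ℝ n (u ε) x‖ ≤ ε ^ (m : ℝ)) :
    NNeg (InternalSet Aε) u := by
  refine ⟨hE.1, fun n x hx => ?_⟩
  obtain ⟨hxm, y, hxy, hy⟩ := isReprOfPointOf_internalSet_iff.1 hx
  have hz : ∀ ε, ∃ z ∈ segment ℝ (x ε) (y ε), 0 < ε → ε < 1 →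
      ‖iteratedFDeriv ℝ n (u ε) (x ε) - iteratedFDeriv ℝ n (u ε) (y ε)‖ ≤
        ‖iteratedFDeriv ℝ (n + 1) (u ε) z‖ * ‖x ε - y ε‖ := by
    intro ε
    by_cases hε : 0 < ε ∧ ε < 1
    · obtain ⟨z, hz, hle⟩ := exists_mem_segment_norm_sub_le
        ((hE.1 ε hε.1 hε.2).iteratedFDeriv_right (m := 1) (mod_cast le_top)) (x ε) (y ε)
      exact ⟨z, hz, fun _ _ => by rwa [← norm_fderiv_iteratedFDeriv]⟩
    · exact ⟨x ε, left_mem_segment ℝ _ _, fun h₀ h₁ => absurd ⟨h₀, h₁⟩ hε⟩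
  choose z hzseg hz using hz
  have hzy : EqvNet z y := Negligible.of_isBigO hxy <| IsBigO.of_bound' <|
    Eventually.of_forall fun ε => by
      simpa only [← dist_eq_norm] using
        (le_add_of_nonneg_left dist_nonneg).trans (dist_add_dist_of_mem_segment (hzseg ε)).le
  have hzA : z ∈ InternalSet Aε := ⟨(hxm.of_eqvNet hxy.symm).of_eqvNet hzy, y, hzy, hy⟩
  have hDz := hE.2 (n + 1) z (isReprOfPointOf_internalSet_iff.2 hzA)
  have hDy : Negligible fun ε => ‖iteratedFDeriv ℝ n (u ε) (y ε)‖ := fun m => by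
    rw [evSmall_iff_eventually] at hy ⊢
    filter_upwards [evSmall_iff_eventually.1 (h n m), hy] with ε hε hyε
    simpa using hε _ hyε
  refine (hDy.add (hDz.norm_mul_negligible hxy)).of_isBigO (IsBigO.of_bound' ?_)
  filter_upwards [self_mem_nhdsWithin, eventually_lt_one_nhdsGT_zero] with ε hε hε1
  calc ‖iteratedFDeriv ℝ n (u ε) (x ε)‖
      ≤ ‖iteratedFDeriv ℝ n (u ε) (y ε)‖ +
        ‖iteratedFDeriv ℝ n (u ε) (x ε) - iteratedFDeriv ℝ n (u ε) (y ε)‖ := norm_le_insert' _ _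
    _ ≤ ‖iteratedFDeriv ℝ n (u ε) (y ε)‖ +
        ‖iteratedFDeriv ℝ (n + 1) (u ε) (z ε)‖ * ‖x ε - y ε‖ := by gcongr; exact hz ε hε hε1
    _ ≤ _ := Real.le_norm_self _

end GeneralizedFunctions

theorem NNeg_internal_sharplyBounded_general (d : ℕ)
    (A : Set (ℝ → EuclideanSpace ℝ (Fin d)))
    (Aε : ℝ → Set (EuclideanSpace ℝ (Fin d)))
    (hA : A = InternalSet Aε) (hne : A.Nonempty)
    (hbd : SharplyBddRep Aε)
    (u : ℝ → EuclideanSpace ℝ (Fin d) → ℂ) (hsm : SmoothNet u) :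
    (NNeg A u ↔ ∀ n m : ℕ, ∃ N : ℕ, EvSmall fun ε =>
        ∀ x ∈ Metric.cthickening (ε ^ (N : ℝ)) (Aε ε),
          ‖iteratedFDeriv ℝ n (u ε) x‖ ≤ ε ^ (m : ℝ)) ∧
    (NNeg A u ↔ (EMod A u ∧ ∀ n m : ℕ, EvSmall fun ε =>
        ∀ x ∈ Aε ε, ‖iteratedFDeriv ℝ n (u ε) x‖ ≤ ε ^ (m : ℝ))) := by
  subst hA
  exact ⟨⟨fun h => h.forall_cthickening hbd hne, NNeg.of_forall_cthickening hsm⟩,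
    ⟨fun h => ⟨h.eMod, h.forall_mem hbd hne⟩, fun h => NNeg.of_eMod_of_forall_mem h.1 h.2⟩⟩

/-- Proposition 3.7: description of `N(A)` for an internal sharply bounded set. -/
theorem NNeg_internal_sharplyBounded (d : ℕ)
    (A : Set (ℝ → EuclideanSpace ℝ (Fin d)))
    (Aε : ℝ → Set (EuclideanSpace ℝ (Fin d)))
    (hA : A = InternalSet Aε) (hne : A.Nonempty)
    (hbdA : SharplyBddSet A) (hbd : SharplyBddRep Aε)
    (u : ℝ → EuclideanSpace ℝ (Fin d) → ℂ) (hsm : SmoothNet u) :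
    (NNeg A u ↔ ∀ n m : ℕ, ∃ N : ℕ, EvSmall fun ε =>
        ∀ x ∈ Metric.cthickening (ε ^ (N : ℝ)) (Aε ε),
          ‖iteratedFDeriv ℝ n (u ε) x‖ ≤ ε ^ (m : ℝ)) ∧
    (NNeg A u ↔ (EMod A u ∧ ∀ n m : ℕ, EvSmall fun ε =>
        ∀ x ∈ Aε ε, ‖iteratedFDeriv ℝ n (u ε) x‖ ≤ ε ^ (m : ℝ))) :=
  NNeg_internal_sharplyBounded_general d A Aε hA hne hbd u hsm

end
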